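/- Let g ≥ 2 be an integer. Then for every positive integer n, λ_g(n) ≤ l_g(n), and consequently for every ε > 0 there exists N such that for all n ≥ N, λ_g(n) ≤ l_g(n) ≤ log_g n + (g^2 · λ_g(n))/λ_g(λ_g(n))^2 + (log_g n)/⌊λ_g(λ_g(n)) − 2λ_g(λ_g(λ_g(n)))⌋. -/

import Mathlib

/-!
Every term of a `g`-addition chain is a sum of at most `g` earlier terms, so `a i ≤ g ^ i`; this
gives `λ_g(n) ≤ l_g(n)`.

The upper bound is the `g ^ k`-ary method. Start with `1, 2, …, g ^ k - 1` (`g ^ k - 2` steps) and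
run through the base-`g ^ k` digits of `n` from the top: multiplying by `g ^ k` takes `k` steps
`x ↦ g x`, and adding the next digit takes one more. Hence
`l_g(n) ≤ g ^ k - 2 + (k + 1) λ_{g^k}(n) ≤ g ^ k + λ_g(n) + λ_g(n) / k`.
Write `L₁ = λ_g(n)`, `L₂ = λ_g(L₁)`, `L₃ = λ_g(L₂)`. For `k = L₂ - 2 L₃` the bound
`L₂ < g ^ (L₃ + 1)` gives `g ^ k L₂ ^ 2 ≤ g ^ (L₂ + 2) ≤ g ^ 2 L₁`.
-/

/-- `IsGAddChain g a r d` says that `a 0 = 1, a 1, …, a r = d` is a `g`-addition chain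
for `d`: each term `a i` (for `1 ≤ i ≤ r`) is a sum `a (j 1) + ⋯ + a (j k)` of `k`
earlier terms, where `2 ≤ k ≤ g` and `j 1 ≤ ⋯ ≤ j k ≤ i - 1`. -/
def IsGAddChain (g : ℕ) (a : ℕ → ℕ) (r : ℕ) (d : ℕ) : Prop :=
  a 0 = 1 ∧ a r = d ∧
  ∀ i, 1 ≤ i → i ≤ r →
    ∃ k, 2 ≤ k ∧ k ≤ g ∧
      ∃ j : Fin k → ℕ, Monotone j ∧ (∀ t, j t ≤ i - 1) ∧
        a i = ∑ t, a (j t)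

/-- `gAddChainLength g d` is `l_g(d)`, the length of a shortest `g`-addition chain for `d`. -/
noncomputable def gAddChainLength (g d : ℕ) : ℕ :=
  sInf {r | ∃ a : ℕ → ℕ, IsGAddChain g a r d}

/-- `nonzeroDigits m d` is `μ_m(d)`, the number of nonzero digits of `d` in base `m`. -/
def nonzeroDigits (m d : ℕ) : ℕ :=
  ((Nat.digits m d).filter (· ≠ 0)).length

open Function

section Chains

variable {g : ℕ} {a a' a'' b : ℕ → ℕ} {r r' r'' s v : ℕ}

def IsGSum (g : ℕ) (a : ℕ → ℕ) (r v : ℕ) : Prop :=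
  ∃ k, 2 ≤ k ∧ k ≤ g ∧
    ∃ j : Fin k → ℕ, Monotone j ∧ (∀ t, j t ≤ r) ∧ v = ∑ t, a (j t)

lemma IsGSum.congr (h : IsGSum g a r v) (ha : ∀ i ≤ r, a' i = a i) : IsGSum g a' r v := by
  obtain ⟨k, hk2, hkg, j, hj, hjr, rfl⟩ := h
  exact ⟨k, hk2, hkg, j, hj, hjr, Finset.sum_congr rfl fun t _ => (ha _ (hjr t)).symm⟩

lemma isGSum_add (hg : 2 ≤ g) {x y : ℕ} (hx : x ≤ r) (hy : y ≤ r) :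
    IsGSum g a r (a x + a y) := by
  wlog hxy : x ≤ y generalizing x y
  · rw [add_comm]
    exact this hy hx (le_of_not_ge hxy)
  refine ⟨2, le_rfl, hg, ![x, y], ?_, Fin.forall_fin_two.2 ⟨hx, hy⟩, by simp⟩
  simpa [Fin.monotone_iff_le_succ] using hxy

lemma isGSum_mul (hg : 2 ≤ g) (hs : s ≤ r) : IsGSum g a r (g * a s) :=
  ⟨g, hg, le_rfl, fun _ => s, monotone_const, fun _ => hs, by simp⟩

def IsGAddSeq (g : ℕ) (a : ℕ → ℕ) (r : ℕ) : Prop :=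
  a 0 = 1 ∧ ∀ i, 1 ≤ i → i ≤ r → IsGSum g a (i - 1) (a i)

lemma isGAddChain_iff {d : ℕ} : IsGAddChain g a r d ↔ IsGAddSeq g a r ∧ a r = d :=
  ⟨fun ⟨h0, hd, h⟩ => ⟨⟨h0, h⟩, hd⟩, fun ⟨⟨h0, h⟩, hd⟩ => ⟨h0, hd, h⟩⟩

def Extends (a' : ℕ → ℕ) (r' : ℕ) (a : ℕ → ℕ) (r : ℕ) : Prop :=
  r ≤ r' ∧ ∀ i ≤ r, a' i = a i

lemma Extends.refl : Extends a r a r :=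
  ⟨le_rfl, fun _ _ => rfl⟩

lemma Extends.trans (h' : Extends a'' r'' a' r') (h : Extends a' r' a r) : Extends a'' r'' a r :=
  ⟨h.1.trans h'.1, fun i hi => (h'.2 i (hi.trans h.1)).trans (h.2 i hi)⟩

lemma extends_update : Extends (update a (r + 1) v) (r + 1) a r :=
  ⟨r.le_succ, fun _ hi => update_of_ne (by omega) _ _⟩

namespace IsGAddSeq

lemma mono (h : IsGAddSeq g a r) (hr : r' ≤ r) : IsGAddSeq g a r' :=
  ⟨h.1, fun i hi hir => h.2 i hi (hir.trans hr)⟩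

lemma update (h : IsGAddSeq g a r) (hv : IsGSum g a r v) :
    IsGAddSeq g (Function.update a (r + 1) v) (r + 1) := by
  have hext : ∀ i ≤ r, Function.update a (r + 1) v i = a i := extends_update.2
  refine ⟨(hext 0 r.zero_le).trans h.1, fun i hi hir => ?_⟩
  rcases hir.lt_or_eq with hir | rfl
  · rw [hext i (by omega)]
    exact (h.2 i hi (by omega)).congr fun j hj => hext j (by omega)
  · simpa using hv.congr hext

lemma le_pow (h : IsGAddSeq g a r) {i : ℕ} (hi : i ≤ r) : a i ≤ g ^ i := by
  induction i using Nat.strong_induction_on with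
  | _ i ih =>
  rcases Nat.eq_zero_or_pos i with rfl | hi0
  · simp [h.1]
  obtain ⟨k, hk2, hkg, j, -, hj, hsum⟩ := h.2 i hi0 hi
  have hterm : ∀ t, a (j t) ≤ g ^ (i - 1) := fun t =>
    (ih (j t) (by have := hj t; omega) (by have := hj t; omega)).trans
      (Nat.pow_le_pow_right (by omega) (hj t))
  calc a i = ∑ t, a (j t) := hsum
    _ ≤ ∑ _t : Fin k, g ^ (i - 1) := Finset.sum_le_sum fun t _ => hterm t
    _ = k * g ^ (i - 1) := by simp
    _ ≤ g * g ^ (i - 1) := Nat.mul_le_mul_right _ hkg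
    _ = g ^ i := by rw [← pow_succ']; congr 1; omega

lemma exists_pow_mul (h : IsGAddSeq g a r) (hg : 2 ≤ g) (hs : s ≤ r) (k : ℕ) :
    ∃ a', IsGAddSeq g a' (r + k) ∧ Extends a' (r + k) a r ∧
      ∃ s' ≤ r + k, a' s' = g ^ k * a s := by
  induction k with
  | zero => exact ⟨a, h, Extends.refl, s, hs, by simp⟩
  | succ k ih =>
    obtain ⟨a', h', ha', s', hs', has'⟩ := ih
    refine ⟨_, h'.update (isGSum_mul hg hs'), extends_update.trans ha', r + k + 1, le_rfl, ?_⟩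
    rw [update_self, has', pow_succ]
    ring

end IsGAddSeq

lemma isGAddSeq_succ (hg : 2 ≤ g) (r : ℕ) : IsGAddSeq g (· + 1) r := by
  refine ⟨rfl, fun i hi _ => ?_⟩
  convert isGSum_add (a := (· + 1)) hg (Nat.zero_le (i - 1)) le_rfl using 1
  dsimp only
  omega

lemma gAddChainLength_le (h : IsGAddSeq g a r) (hs : s ≤ r) : gAddChainLength g (a s) ≤ s :=
  Nat.sInf_le ⟨a, isGAddChain_iff.2 ⟨h.mono hs, rfl⟩⟩

lemma log_le_gAddChainLength (hg : 2 ≤ g) {n : ℕ} (hn : 0 < n) :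
    Nat.log g n ≤ gAddChainLength g n := by
  have hne : {r | ∃ a, IsGAddChain g a r n}.Nonempty :=
    ⟨n - 1, _, isGAddChain_iff.2 ⟨isGAddSeq_succ hg _, Nat.sub_add_cancel hn⟩⟩
  obtain ⟨a, ha⟩ := Nat.sInf_mem hne
  obtain ⟨ha, han⟩ := isGAddChain_iff.1 ha
  calc Nat.log g n ≤ Nat.log g (g ^ gAddChainLength g n) :=
        Nat.log_mono_right (han.symm.trans_le (ha.le_pow le_rfl))
    _ = gAddChainLength g n := Nat.log_pow hg _

theorem IsGAddSeq.exists_extends_pow_ary (hg : 2 ≤ g) {k : ℕ} (hk : 1 ≤ k) {r₀ : ℕ}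
    (hb : IsGAddSeq g b r₀) (hdigits : ∀ d, 0 < d → d < g ^ k → ∃ i ≤ r₀, b i = d)
    {n : ℕ} (hn : 0 < n) :
    ∃ a r, IsGAddSeq g a r ∧ Extends a r b r₀ ∧ r ≤ r₀ + (k + 1) * Nat.log (g ^ k) n ∧
      ∃ s ≤ r, a s = n := by
  induction n using Nat.strong_induction_on with
  | _ n ih =>
  have hgk : 2 ≤ g ^ k := hg.trans (Nat.le_self_pow (by omega) g)
  rcases lt_or_ge n (g ^ k) with hlt | hge
  · obtain ⟨s, hs, hbs⟩ := hdigits n hn hlt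
    exact ⟨b, r₀, hb, Extends.refl, by omega, s, hs, hbs⟩
  obtain ⟨a, r, ha, hab, hr, s, hs, has⟩ :=
    ih (n / g ^ k) (Nat.div_lt_self hn (by omega)) (Nat.div_pos hge (by omega))
  obtain ⟨a₁, ha₁, ha₁a, s₁, hs₁, has₁⟩ := ha.exists_pow_mul hg hs k
  have hlog : Nat.log (g ^ k) (n / g ^ k) + 1 = Nat.log (g ^ k) n := by
    have := Nat.log_div_base (g ^ k) n
    have := Nat.log_pos hgk hge
    omega
  have hr₁ : r + k + 1 ≤ r₀ + (k + 1) * Nat.log (g ^ k) n := by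
    rw [← hlog, mul_add_one]
    omega
  have hn_eq : g ^ k * (n / g ^ k) + n % g ^ k = n := Nat.div_add_mod n (g ^ k)
  rw [has] at has₁
  rcases Nat.eq_zero_or_pos (n % g ^ k) with hd | hd
  · exact ⟨a₁, r + k, ha₁, ha₁a.trans hab, by omega, s₁, hs₁, by omega⟩
  obtain ⟨i, hi, hbi⟩ := hdigits _ hd (Nat.mod_lt _ (by omega))
  have ha₁i : a₁ i = n % g ^ k := ((ha₁a.trans hab).2 i hi).trans hbi
  refine ⟨_, r + k + 1, ha₁.update (isGSum_add (x := i) hg (by have := hab.1; omega) hs₁),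
    extends_update.trans (ha₁a.trans hab), hr₁, r + k + 1, le_rfl, ?_⟩
  rw [update_self, ha₁i, has₁]
  omega

theorem gAddChainLength_le_pow_ary (hg : 2 ≤ g) {k : ℕ} (hk : 1 ≤ k) {n : ℕ} (hn : 0 < n) :
    gAddChainLength g n ≤ g ^ k - 2 + (k + 1) * Nat.log (g ^ k) n := by
  have hdigits : ∀ d, 0 < d → d < g ^ k → ∃ i ≤ g ^ k - 2, i + 1 = d :=
    fun d hd hdk => ⟨d - 1, by omega, by omega⟩
  obtain ⟨a, r, ha, -, hr, s, hs, rfl⟩ :=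
    (isGAddSeq_succ hg _).exists_extends_pow_ary hg hk hdigits hn
  exact (gAddChainLength_le ha hs).trans (hs.trans hr)

end Chains

section Logarithms

variable {g : ℕ}

lemma two_mul_lt_two_pow {L : ℕ} (hL : 3 ≤ L) : 2 * L < 2 ^ L := by
  induction L, hL using Nat.le_induction with
  | base => norm_num
  | succ L _ ih => rw [pow_succ]; omega

lemma two_mul_log_lt (hg : 2 ≤ g) {y : ℕ} (hy : 3 ≤ Nat.log g y) : 2 * Nat.log g y < y :=
  calc 2 * Nat.log g y < 2 ^ Nat.log g y := two_mul_lt_two_pow hy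
    _ ≤ g ^ Nat.log g y := Nat.pow_le_pow_left hg _
    _ ≤ y := Nat.pow_log_le_self g (by rintro rfl; simp at hy)

lemma pow_sub_two_mul_log_mul_sq_le (hg : 2 ≤ g) {y : ℕ} (hy : 2 * Nat.log g y ≤ y) :
    g ^ (y - 2 * Nat.log g y) * y ^ 2 ≤ g ^ (y + 2) := by
  have hsq : y ^ 2 ≤ g ^ (2 * Nat.log g y + 2) :=
    calc y ^ 2 ≤ (g ^ (Nat.log g y + 1)) ^ 2 :=
          Nat.pow_le_pow_left (Nat.lt_pow_succ_log_self hg y).le 2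
      _ = g ^ (2 * Nat.log g y + 2) := by ring
  calc g ^ (y - 2 * Nat.log g y) * y ^ 2
      ≤ g ^ (y - 2 * Nat.log g y) * g ^ (2 * Nat.log g y + 2) := Nat.mul_le_mul_left _ hsq
    _ = g ^ (y + 2) := by rw [← pow_add]; congr 1; omega

lemma mul_log_pow_le_log (hg : 2 ≤ g) (k n : ℕ) : k * Nat.log (g ^ k) n ≤ Nat.log g n := by
  rcases Nat.eq_zero_or_pos n with rfl | hn
  · simp
  exact Nat.le_log_of_pow_le hg (by rw [pow_mul]; exact Nat.pow_log_le_self _ hn.ne')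

end Logarithms

theorem gAddChainLength_le_explicit {g : ℕ} (hg : 2 ≤ g) {n : ℕ} (hn : g ^ g ^ g ^ 3 ≤ n) :
    (gAddChainLength g n : ℝ) ≤
      Real.logb g n +
        (g : ℝ) ^ 2 * (Nat.log g n : ℝ) / (Nat.log g (Nat.log g n) : ℝ) ^ 2 +
        Real.logb g n /
          (((Nat.log g (Nat.log g n) : ℤ) -
            2 * (Nat.log g (Nat.log g (Nat.log g n)) : ℤ) : ℤ) : ℝ) := by
  set L₁ := Nat.log g n
  set L₂ := Nat.log g L₁
  set L₃ := Nat.log g L₂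
  have hL₁ : g ^ g ^ 3 ≤ L₁ := Nat.le_log_of_pow_le hg hn
  have hL₁_pos : 0 < L₁ := (Nat.pow_pos (by omega)).trans_le hL₁
  have hL₃ : 3 ≤ L₃ := Nat.le_log_of_pow_le hg (Nat.le_log_of_pow_le hg hL₁)
  have hk : 2 * L₃ < L₂ := two_mul_log_lt hg hL₃
  set k := L₂ - 2 * L₃
  have hlen : gAddChainLength g n ≤ g ^ k + L₁ + Nat.log (g ^ k) n := by
    have hary := gAddChainLength_le_pow_ary hg (k := k) (by omega)
      ((Nat.pow_pos (by omega)).trans_le hn)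
    have := mul_log_pow_le_log hg k n
    rw [add_one_mul] at hary
    omega
  have hpow : g ^ k * L₂ ^ 2 ≤ g ^ 2 * L₁ :=
    calc g ^ k * L₂ ^ 2 ≤ g ^ (L₂ + 2) := pow_sub_two_mul_log_mul_sq_le hg hk.le
      _ = g ^ 2 * g ^ L₂ := by ring
      _ ≤ g ^ 2 * L₁ := Nat.mul_le_mul_left _ (Nat.pow_log_le_self g hL₁_pos.ne')
  have hlogb : (L₁ : ℝ) ≤ Real.logb g n := Real.natLog_le_logb n g
  have hk_cast : ((L₂ : ℤ) - 2 * (L₃ : ℤ) : ℤ) = k := by omega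
  rw [hk_cast, Int.cast_natCast]
  have hpowR : (g : ℝ) ^ k ≤ (g : ℝ) ^ 2 * L₁ / (L₂ : ℝ) ^ 2 := by
    rw [le_div_iff₀ (pow_pos (Nat.cast_pos.2 (by omega)) 2)]
    exact_mod_cast hpow
  have htR : (Nat.log (g ^ k) n : ℝ) ≤ Real.logb g n / k := by
    rw [le_div_iff₀ (Nat.cast_pos.2 (by omega)), mul_comm]
    exact le_trans (by exact_mod_cast mul_log_pow_le_log hg k n) hlogb
  have hlenR : (gAddChainLength g n : ℝ) ≤ (g : ℝ) ^ k + L₁ + Nat.log (g ^ k) n := by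
    exact_mod_cast hlen
  linarith

/-- for an integer `g ≥ 2`: every positive integer `n` satisfies
`λ_g(n) ≤ l_g(n)`, and for every `ε > 0` there is `N` such that for all `n ≥ N`,
`λ_g(n) ≤ l_g(n) ≤ log_g n + g² λ_g(n) / λ_g(λ_g(n))² +
  log_g n / ⌊λ_g(λ_g(n)) - 2 λ_g(λ_g(λ_g(n)))⌋`. -/
theorem gAddChainLength_explicit_bounds (g : ℕ) (hg : 2 ≤ g) :
    (∀ n : ℕ, 1 ≤ n → Nat.log g n ≤ gAddChainLength g n) ∧
    ∀ ε : ℝ, 0 < ε → ∃ N : ℕ, ∀ n : ℕ, N ≤ n →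
      Nat.log g n ≤ gAddChainLength g n ∧
      (gAddChainLength g n : ℝ) ≤
        Real.logb g n +
          (g : ℝ) ^ 2 * (Nat.log g n : ℝ) / (Nat.log g (Nat.log g n) : ℝ) ^ 2 +
          Real.logb g n /
            (((Nat.log g (Nat.log g n) : ℤ) -
              2 * (Nat.log g (Nat.log g (Nat.log g n)) : ℤ) : ℤ) : ℝ) :=
  ⟨fun _ hn => log_le_gAddChainLength hg hn, fun _ _ => ⟨g ^ g ^ g ^ 3, fun _ hn =>
    ⟨log_le_gAddChainLength hg ((Nat.pow_pos (by omega)).trans_le hn),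
      gAddChainLength_le_explicit hg hn⟩⟩⟩
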